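/- arXiv:2207.13408 — 2 statements merged into one kernel-verified Lean document; each statement's English description precedes it below -/
import Mathlib

section
/- Let p be a prime, U a finite p-group, and f : M → N a surjective homomorphism of finitely generated projective 𝔽_p[U]-modules. If the induced map on U-invariants f^U : M^U → N^U is injective, then f is an isomorphism. -/
/-!
The kernel of `f` is a finite `𝔽_p`-vector space, so its order is a power of `p`, and `U` acts
on it linearly. A `p`-group acting on a set of order divisible by `p` with one fixed point (here
`0`) has another, so a nonzero kernel would contain a nonzero invariant vector, contradicting
injectivity on invariants.
-/

open MonoidAlgebra

namespace IsPGroup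

variable {p : ℕ} [Fact p.Prime] {G : Type*} [Group G]

theorem exists_fixed_ne_zero (hG : IsPGroup p G) (V : Type*) [AddCommGroup V]
    [Module (ZMod p) V] [DistribMulAction G V] [Finite V] [Nontrivial V] :
    ∃ v : V, v ≠ 0 ∧ ∀ g : G, g • v = v := by
  have : Module.Finite (ZMod p) V := Module.Finite.of_finite
  have hp : p ∣ Nat.card V := by
    rw [Module.natCard_eq_pow_finrank (K := ZMod p), Nat.card_zmod]
    exact dvd_pow_self p Module.finrank_pos.ne'
  obtain ⟨v, hv, hv0⟩ :=
    hG.exists_fixed_point_of_prime_dvd_card_of_fixed_point V hp (a := 0) (smul_zero ·)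
  exact ⟨v, hv0.symm, hv⟩

theorem exists_monoidAlgebra_fixed_ne_zero (hG : IsPGroup p G) (V : Type*) [AddCommGroup V]
    [Module (MonoidAlgebra (ZMod p) G) V] [Finite V] [Nontrivial V] :
    ∃ v : V, v ≠ 0 ∧ ∀ g : G, of (ZMod p) G g • v = v :=
  letI := Module.compHom V (algebraMap (ZMod p) (MonoidAlgebra (ZMod p) G))
  letI := DistribMulAction.compHom V (of (ZMod p) G)
  hG.exists_fixed_ne_zero V

theorem injective_of_fixed_mem_ker_eq_zero (hG : IsPGroup p G) {M N : Type*}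
    [AddCommGroup M] [AddCommGroup N] [Module (MonoidAlgebra (ZMod p) G) M]
    [Module (MonoidAlgebra (ZMod p) G) N] [Finite M] (f : M →ₗ[MonoidAlgebra (ZMod p) G] N)
    (hker : ∀ m : M, (∀ g : G, of (ZMod p) G g • m = m) → f m = 0 → m = 0) :
    Function.Injective f := by
  rw [← LinearMap.ker_eq_bot]
  by_contra hne
  have : Nontrivial (LinearMap.ker f) := Submodule.nontrivial_iff_ne_bot.mpr hne
  obtain ⟨⟨v, hvker⟩, hv0, hvfix⟩ := hG.exists_monoidAlgebra_fixed_ne_zero (LinearMap.ker f)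
  exact hv0 (Subtype.ext (hker v (fun g => congrArg Subtype.val (hvfix g)) hvker))

end IsPGroup

theorem surjective_injective_on_invariants_is_iso_general (p : ℕ) [Fact p.Prime]
    (U : Type) [Group U] [Finite U] (hU : IsPGroup p U)
    (M N : Type) [AddCommGroup M] [AddCommGroup N]
    [Module (MonoidAlgebra (ZMod p) U) M] [Module (MonoidAlgebra (ZMod p) U) N]
    [Module.Finite (MonoidAlgebra (ZMod p) U) M]
    (f : M →ₗ[MonoidAlgebra (ZMod p) U] N)
    (hsurj : Function.Surjective f)
    (hinv : ∀ m m' : M,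
      (∀ u : U, MonoidAlgebra.of (ZMod p) U u • m = m) →
      (∀ u : U, MonoidAlgebra.of (ZMod p) U u • m' = m') →
      f m = f m' → m = m') :
    Function.Bijective f := by
  have : Finite (MonoidAlgebra (ZMod p) U) := Module.finite_of_finite (ZMod p)
  have : Finite M := Module.finite_of_finite (MonoidAlgebra (ZMod p) U)
  refine ⟨hU.injective_of_fixed_mem_ker_eq_zero f fun m hm hfm => ?_, hsurj⟩
  exact hinv m 0 hm (fun _ => smul_zero _) (by rw [hfm, map_zero])

/-- Priddy–Wilkerson comparison, algebraic core: a surjection of finitely generated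
projective `𝔽_p[U]`-modules (`U` a finite `p`-group) which is injective on
`U`-invariants is an isomorphism. -/
theorem surjective_injective_on_invariants_is_iso (p : ℕ) [Fact p.Prime]
    (U : Type) [Group U] [Finite U] (hU : IsPGroup p U)
    (M N : Type) [AddCommGroup M] [AddCommGroup N]
    [Module (MonoidAlgebra (ZMod p) U) M] [Module (MonoidAlgebra (ZMod p) U) N]
    [Module.Finite (MonoidAlgebra (ZMod p) U) M]
    [Module.Finite (MonoidAlgebra (ZMod p) U) N]
    (hM : Module.Projective (MonoidAlgebra (ZMod p) U) M)
    (hN : Module.Projective (MonoidAlgebra (ZMod p) U) N)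
    (f : M →ₗ[MonoidAlgebra (ZMod p) U] N)
    (hsurj : Function.Surjective f)
    (hinv : ∀ m m' : M,
      (∀ u : U, MonoidAlgebra.of (ZMod p) U u • m = m) →
      (∀ u : U, MonoidAlgebra.of (ZMod p) U u • m' = m') →
      f m = f m' → m = m') :
    Function.Bijective f :=
  surjective_injective_on_invariants_is_iso_general p U hU M N f hsurj hinv
end

section
/- Let p be a prime and k ≥ 2. The reduced Euler characteristic of the order complex of the poset of proper nontrivial subgroups of (ℤ/p)^k equals (−1)^k · p^(k(k−1)/2). -/
/-!
By Philip Hall's theorem, the reduced Euler characteristic of the order complex of an open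
interval `(a, b)` is the Möbius number `μ(a, b)`: sorting the chains of `(a, b)` by their greatest
element shows that both satisfy `μ(a, b) = -1 - ∑_{a < x < b} μ(a, x)`.

Subgroups of `(ℤ/p)^k` are the `𝔽_p`-subspaces, and in the subspace lattice of an `n`-dimensional
`𝔽_q`-space `∑_{W ≤ V} (-1)^{dim W} q^{C(dim W, 2)} = ∏_{i < n} (1 - q^i)`, which vanishes for
`n ≥ 1`; by Möbius inversion, `μ(0, V) = (-1)^n q^{C(n, 2)}`. The product formula follows by
induction on `n`, sorting subspaces by their intersection with a hyperplane `H`: the subspaces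
meeting `H` in `W` are `W` itself and `q^{dim H - dim W}` subspaces of dimension `dim W + 1`.
-/

open Finset IncidenceAlgebra Module Submodule

namespace Finset

variable {α : Type*} [PartialOrder α]

open scoped Classical in
noncomputable def chains (s : Finset α) : Finset (Finset α) :=
  {S ∈ s.powerset | IsChain (· ≤ ·) (S : Set α)}

lemma mem_chains {s S : Finset α} : S ∈ s.chains ↔ S ⊆ s ∧ IsChain (· ≤ ·) (S : Set α) := by
  simp [chains]

/-- The empty chain counts as the `(-1)`-dimensional face of the order complex. -/
noncomputable def reducedEulerChar (s : Finset α) : ℤ := -∑ S ∈ s.chains, (-1) ^ S.card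

lemma exists_isGreatest_of_isChain {S : Finset α} (hS : IsChain (· ≤ ·) (S : Set α))
    (hne : S.Nonempty) : ∃ x, IsGreatest (S : Set α) x := by
  obtain ⟨x, hx, hmax⟩ := S.exists_maximal hne
  exact ⟨x, hx, fun y hy => (hS.total hy hx).elim id (hmax hy)⟩

lemma card_Ico_lt_card_Ico_of_mem [LocallyFiniteOrder α] {a b x : α} (hx : x ∈ Ico a b) :
    #(Ico a x) < #(Ico a b) :=
  card_lt_card <| (ssubset_iff_of_subset (Ico_subset_Ico_right (mem_Ico.1 hx).2.le)).2
    ⟨x, hx, right_notMem_Ico⟩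

variable [DecidableEq α]

lemma sum_chains_erase_empty (s : Finset α) :
    ∑ T ∈ s.chains.erase ∅, (-1 : ℤ) ^ (T.card - 1) = s.reducedEulerChar + 1 := by
  have hempty : (∅ : Finset α) ∈ s.chains := mem_chains.2 ⟨empty_subset s, by simp⟩
  have hpred : ∀ T ∈ s.chains.erase ∅, (-1 : ℤ) ^ (T.card - 1) = -(-1) ^ T.card := fun T hT => by
    obtain ⟨n, hn⟩ :=
      Nat.exists_eq_add_one.2 (card_pos.2 (nonempty_iff_ne_empty.2 (ne_of_mem_erase hT)))
    rw [hn, Nat.add_sub_cancel, pow_succ]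
    ring
  rw [sum_congr rfl hpred, sum_neg_distrib, sum_erase_eq_sub hempty, reducedEulerChar, card_empty,
    pow_zero]
  ring

variable [DecidableLT α]

/-- Splitting off its greatest element `x` turns a nonempty chain of `s` into a chain of the
elements of `s` below `x`. -/
lemma sum_sum_chains_filter_lt (s : Finset α) :
    ∑ x ∈ s, ∑ S ∈ (s.filter (· < x)).chains, (-1 : ℤ) ^ S.card
      = ∑ T ∈ s.chains.erase ∅, (-1) ^ (T.card - 1) := by
  have below {x : α} {S : Finset α} (hS : S ∈ (s.filter (· < x)).chains) (y : α) (hy : y ∈ S) :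
      y < x :=
    (mem_filter.1 ((mem_chains.1 hS).1 hy)).2
  have greatest {x : α} {S : Finset α} (hS : S ∈ (s.filter (· < x)).chains) :
      IsGreatest (insert x S : Finset α) x :=
    ⟨mem_insert_self x S, fun y hy => (mem_insert.1 hy).elim le_of_eq fun hy => (below hS y hy).le⟩
  rw [sum_sigma']
  refine sum_bij (fun xS _ => insert xS.1 xS.2) ?_ ?_ ?_ ?_
  · rintro ⟨x, S⟩ hxS
    obtain ⟨hx, hS⟩ := mem_sigma.1 hxS
    refine mem_erase.2 ⟨insert_ne_empty _ _, mem_chains.2 ⟨?_, ?_⟩⟩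
    · exact insert_subset hx fun y hy => (mem_filter.1 ((mem_chains.1 hS).1 hy)).1
    · rw [coe_insert]
      exact (mem_chains.1 hS).2.insert fun y hy _ => Or.inr (below hS y hy).le
  · rintro ⟨x, S⟩ hxS ⟨x', S'⟩ hxS' (h : insert x S = insert x' S')
    obtain rfl : x = x' :=
      (greatest (mem_sigma.1 hxS).2).unique (by rw [h]; exact greatest (mem_sigma.1 hxS').2)
    have hS : S = S' := by
      rw [← erase_insert (s := S) fun hx => (below (mem_sigma.1 hxS).2 x hx).false, h,
        erase_insert fun hx => (below (mem_sigma.1 hxS').2 x hx).false]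
    rw [hS]
  · intro T hT
    obtain ⟨hne, hTs, hT⟩ := by simpa [mem_chains] using hT
    obtain ⟨x, hxT, hx⟩ := exists_isGreatest_of_isChain hT (nonempty_iff_ne_empty.2 hne)
    refine ⟨⟨x, T.erase x⟩, mem_sigma.2 ⟨hTs hxT, mem_chains.2 ⟨fun y hy => ?_, ?_⟩⟩,
      insert_erase hxT⟩
    · obtain ⟨hyx, hyT⟩ := mem_erase.1 hy
      exact mem_filter.2 ⟨hTs hyT, (hx hyT).lt_of_ne hyx⟩
    · exact hT.mono (by simp)
  · rintro ⟨x, S⟩ hxS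
    rw [card_insert_of_notMem fun hx => (below (mem_sigma.1 hxS).2 x hx).false, Nat.add_sub_cancel]

lemma reducedEulerChar_eq_neg_one_sub_sum (s : Finset α) :
    s.reducedEulerChar = -1 - ∑ x ∈ s, (s.filter (· < x)).reducedEulerChar := by
  simp only [reducedEulerChar, sum_neg_distrib, sum_sum_chains_filter_lt, sum_chains_erase_empty]
  ring

end Finset

namespace IncidenceAlgebra

variable {α : Type*} [PartialOrder α] [LocallyFiniteOrder α] [DecidableEq α]

/-- Philip Hall's theorem. -/
theorem mu_eq_reducedEulerChar_Ioo {a b : α} (hab : a < b) :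
    mu ℤ a b = (Ioo a b).reducedEulerChar := by
  classical
  induction hn : #(Ico a b) using Nat.strong_induction_on generalizing b with
  | _ n ih =>
  have hbelow (x : α) (hx : x ∈ Ioo a b) : (Ioo a b).filter (· < x) = Ioo a x := by
    ext y
    simp only [mem_filter, mem_Ioo]
    exact ⟨fun h => ⟨h.1.1, h.2⟩, fun h => ⟨⟨h.1, h.2.trans (mem_Ioo.1 hx).2⟩, h.2⟩⟩
  have hmu (x : α) (hx : x ∈ Ioo a b) : mu ℤ a x = (Ioo a x).reducedEulerChar :=
    ih _ (hn ▸ card_Ico_lt_card_Ico_of_mem (Ioo_subset_Ico_self hx)) (mem_Ioo.1 hx).1 rfl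
  rw [mu_eq_neg_sum_Ico_of_ne hab.ne, ← Ioo_insert_left hab, sum_insert left_notMem_Ioo, mu_self,
    sum_congr rfl hmu, reducedEulerChar_eq_neg_one_sub_sum (Ioo a b),
    sum_congr rfl fun x hx => congrArg reducedEulerChar (hbelow x hx)]
  ring

theorem mu_map_orderIso {𝕜 β : Type*} [AddCommGroup 𝕜] [One 𝕜] [PartialOrder β]
    [LocallyFiniteOrder β] [DecidableEq β] (e : α ≃o β) (a b : α) :
    mu 𝕜 (e a) (e b) = mu 𝕜 a b := by
  induction hn : #(Ico a b) using Nat.strong_induction_on generalizing b with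
  | _ n ih =>
  rcases eq_or_ne a b with rfl | hab
  · simp
  rw [mu_eq_neg_sum_Ico_of_ne (e.injective.ne hab), mu_eq_neg_sum_Ico_of_ne hab, neg_inj]
  exact (sum_equiv e.toEquiv (fun x => by simp) fun x hx =>
    (ih _ (hn ▸ card_Ico_lt_card_Ico_of_mem hx) x rfl).symm).symm

end IncidenceAlgebra

theorem finsum_chains_sub_one_eq_reducedEulerChar {α : Type*} [PartialOrder α] [BoundedOrder α]
    [LocallyFiniteOrder α] :
    (∑ᶠ (S : Finset {x : α // x ≠ ⊥ ∧ x ≠ ⊤})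
        (_ : S.Nonempty ∧ IsChain (· ≤ ·) (S : Set {x : α // x ≠ ⊥ ∧ x ≠ ⊤})),
        (-1 : ℤ) ^ (S.card - 1)) - 1 = (Ioo (⊥ : α) ⊤).reducedEulerChar := by
  classical
  have : Finite α := Set.finite_univ_iff.1 (Set.Icc_bot_top (α := α) ▸ Set.finite_Icc ⊥ ⊤)
  have : Fintype {x : α // x ≠ ⊥ ∧ x ≠ ⊤} := Fintype.ofFinite _
  rw [sub_eq_iff_eq_add, ← sum_chains_erase_empty, finsum_eq_sum_of_fintype]
  simp only [finsum_eq_if]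
  rw [← sum_filter]
  refine sum_bij (fun S _ => S.map (Function.Embedding.subtype _)) ?_ ?_ ?_ (fun _ _ => by simp)
  · intro S hS
    obtain ⟨hne, hS⟩ := (mem_filter.1 hS).2
    refine mem_erase.2 ⟨hne.map.ne_empty, mem_chains.2 ⟨fun x hx => ?_, ?_⟩⟩
    · obtain ⟨y, -, rfl⟩ := mem_map.1 hx
      exact mem_Ioo.2 ⟨bot_lt_iff_ne_bot.2 y.2.1, lt_top_iff_ne_top.2 y.2.2⟩
    · rw [coe_map]
      exact hS.image (OrderEmbedding.subtype _)
  · exact fun S _ T _ h => map_injective _ h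
  · intro T hT
    obtain ⟨hne, hTs, hT⟩ := by simpa [mem_chains] using hT
    have hprop (x : α) (hx : x ∈ T) : x ≠ ⊥ ∧ x ≠ ⊤ :=
      ⟨(mem_Ioo.1 (hTs hx)).1.ne', (mem_Ioo.1 (hTs hx)).2.ne⟩
    refine ⟨T.subtype _, mem_filter.2 ⟨mem_univ _, ?_, ?_⟩, subtype_map_of_mem hprop⟩
    · obtain ⟨x, hx⟩ := nonempty_iff_ne_empty.2 hne
      exact ⟨⟨x, hprop x hx⟩, mem_subtype.2 hx⟩
    · convert hT.preimage_embedding (OrderEmbedding.subtype _) using 1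
      ext
      simp

section Hyperplane

variable {K V : Type*} [Field K] [AddCommGroup V] [Module K V] {φ : V →ₗ[K] K} {W : Submodule K V}

lemma sup_span_singleton_inf_ker (hW : W ≤ LinearMap.ker φ) {u : V} (hu : φ u ≠ 0) :
    (W ⊔ K ∙ u) ⊓ LinearMap.ker φ = W := by
  rw [sup_inf_assoc_of_le _ hW, disjoint_iff.1 ((disjoint_span_singleton_of_notMem hu).symm),
    sup_bot_eq]

lemma exists_eq_sup_span_singleton {v : V} (hv : φ v = 1) {z : Submodule K V}
    (hz : z ⊓ LinearMap.ker φ = W) (hzW : z ≠ W) :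
    ∃ h : LinearMap.ker φ, z = W ⊔ K ∙ (v + h) := by
  obtain ⟨u, huz, hu⟩ : ∃ u ∈ z, φ u ≠ 0 := by
    by_contra! h
    exact hzW (hz ▸ (inf_eq_left.2 fun x hx => h x hx).symm)
  set u' := (φ u)⁻¹ • u
  have hu' : φ u' = 1 := by simp [u', hu]
  refine ⟨⟨u' - v, by simp [hu', hv]⟩, ?_⟩
  have hsup : LinearMap.ker φ ⊔ K ∙ u' = ⊤ :=
    (isCompl_span_singleton_of_isCoatom_of_notMem
      (LinearMap.isCoatom_ker_of_surjective fun c => ⟨c • v, by simp [hv]⟩)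
      (by simp [hu'])).sup_eq_top
  have hu'z : K ∙ u' ≤ z := (span_singleton_le_iff_mem _ _).2 (z.smul_mem _ huz)
  calc z = z ⊓ (LinearMap.ker φ ⊔ K ∙ u') := by rw [hsup, inf_top_eq]
    _ = W ⊔ K ∙ u' := by rw [← inf_sup_assoc_of_le _ hu'z, hz]
    _ = W ⊔ K ∙ (v + (u' - v)) := by rw [add_sub_cancel]

lemma sup_span_singleton_eq_sup_span_singleton_iff (hW : W ≤ LinearMap.ker φ) {v : V} (hv : φ v = 1)
    (h₁ h₂ : LinearMap.ker φ) :
    W ⊔ K ∙ (v + h₁) = W ⊔ K ∙ (v + h₂) ↔ (h₁ : V) - h₂ ∈ W := by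
  have hle : ∀ x y : V, x - y ∈ W → W ⊔ K ∙ x ≤ W ⊔ K ∙ y := fun x y hxy =>
    sup_le le_sup_left <| (span_singleton_le_iff_mem _ _).2 <| by
      simpa using add_mem (mem_sup_left hxy) (mem_sup_right (mem_span_singleton_self y))
  constructor
  · intro heq
    rw [← sup_span_singleton_inf_ker hW (u := v + h₂) (by simp [hv, LinearMap.mem_ker.1 h₂.2])]
    have hsub := sub_mem (heq ▸ mem_sup_right (mem_span_singleton_self (v + h₁)))
      (mem_sup_right (mem_span_singleton_self (v + h₂)))
    rw [add_sub_add_left_eq_sub] at hsub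
    exact ⟨hsub, sub_mem h₁.2 h₂.2⟩
  · intro h
    exact le_antisymm (hle _ _ (by simpa using h)) (hle _ _ (by simpa using W.neg_mem h))

lemma natCard_inf_ker_eq_and_ne [Module.Finite K V] (hW : W ≤ LinearMap.ker φ) {v : V}
    (hv : φ v = 1) :
    Nat.card {z : Submodule K V // z ⊓ LinearMap.ker φ = W ∧ z ≠ W}
      = Nat.card K ^ (finrank K (LinearMap.ker φ) - finrank K W) := by
  set f : LinearMap.ker φ → Submodule K V := fun h => W ⊔ K ∙ (v + h)
  have hφ : ∀ h : LinearMap.ker φ, φ (v + h) = 1 := fun h => by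
    simp [hv, LinearMap.mem_ker.1 h.2]
  have hrange : Set.range f = {z | z ⊓ LinearMap.ker φ = W ∧ z ≠ W} := by
    ext z
    constructor
    · rintro ⟨h, rfl⟩
      refine ⟨sup_span_singleton_inf_ker hW (by simp [hφ]), fun heq => ?_⟩
      have : v + (h : V) ∈ LinearMap.ker φ := hW (heq ▸ mem_sup_right (mem_span_singleton_self _))
      simp [hφ] at this
    · rintro ⟨hz, hzW⟩
      obtain ⟨h, rfl⟩ := exists_eq_sup_span_singleton hv hz hzW
      exact ⟨h, rfl⟩
  have hker : Setoid.ker f = (W.comap (LinearMap.ker φ).subtype).quotientRel :=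
    Setoid.ext fun h₁ h₂ => by
      rw [Setoid.ker_def, quotientRel_def, mem_comap, subtype_apply, AddSubgroupClass.coe_sub]
      exact sup_span_singleton_eq_sup_span_singleton_iff hW hv h₁ h₂
  have hrank : finrank K (W.comap (LinearMap.ker φ).subtype) = finrank K W :=
    (comapSubtypeEquivOfLe hW).finrank_eq
  have hquot := (W.comap (LinearMap.ker φ).subtype).finrank_quotient_add_finrank
  calc Nat.card {z : Submodule K V // z ⊓ LinearMap.ker φ = W ∧ z ≠ W}
      = Nat.card (Set.range f) := by rw [hrange]; rfl
    _ = Nat.card (Quotient (Setoid.ker f)) := (Nat.card_congr (Setoid.quotientKerEquivRange f)).symm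
    _ = Nat.card (LinearMap.ker φ ⧸ W.comap (LinearMap.ker φ).subtype) := by rw [hker]; rfl
    _ = Nat.card K ^ (finrank K (LinearMap.ker φ) - finrank K W) := by
      rw [Module.natCard_eq_pow_finrank (K := K)]
      congr 1
      omega

end Hyperplane

instance Submodule.finite_of_finite {R M : Type*} [Semiring R] [AddCommMonoid M] [Module R M]
    [Finite M] : Finite (Submodule R M) :=
  Finite.of_injective _ SetLike.coe_injective

section Count

variable {K V : Type*} [Field K] [AddCommGroup V] [Module K V] [Module.Finite K V]

lemma sum_filter_inf_ker_eq [Fintype (Submodule K V)] [DecidableEq (Submodule K V)]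
    {φ : V →ₗ[K] K} {W : Submodule K V} (hW : W ≤ LinearMap.ker φ) {v : V} (hv : φ v = 1) :
    ∑ z ∈ univ.filter (· ⊓ LinearMap.ker φ = W),
        (-1 : ℤ) ^ finrank K z * (Nat.card K : ℤ) ^ (finrank K z).choose 2
      = (-1 : ℤ) ^ finrank K W * (Nat.card K : ℤ) ^ (finrank K W).choose 2
          * (1 - (Nat.card K : ℤ) ^ finrank K (LinearMap.ker φ)) := by
  have hsplit : univ.filter (· ⊓ LinearMap.ker φ = W)
      = insert W (univ.filter fun z => z ⊓ LinearMap.ker φ = W ∧ z ≠ W) := by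
    ext z
    by_cases hz : z = W <;> simp [hz, hW]
  have hdim : ∀ z ∈ univ.filter (fun z => z ⊓ LinearMap.ker φ = W ∧ z ≠ W),
      finrank K z = finrank K W + 1 := fun z hz => by
    obtain ⟨h, rfl⟩ := exists_eq_sup_span_singleton hv (mem_filter.1 hz).2.1 (mem_filter.1 hz).2.2
    refine finrank_sup_span_singleton fun hmem => ?_
    simpa [hv, LinearMap.mem_ker.1 h.2] using hW hmem
  have hcard : #(univ.filter fun z => z ⊓ LinearMap.ker φ = W ∧ z ≠ W)
      = Nat.card K ^ (finrank K (LinearMap.ker φ) - finrank K W) := by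
    rw [← natCard_inf_ker_eq_and_ne hW hv, Nat.card_eq_fintype_card, Fintype.card_subtype]
  obtain ⟨e, he⟩ := Nat.exists_eq_add_of_le (Submodule.finrank_mono hW)
  rw [hsplit, sum_insert (by simp), sum_congr rfl fun z hz => by rw [hdim z hz], sum_const, hcard,
    he, Nat.add_sub_cancel_left, Nat.choose_succ_succ, Nat.choose_one_right, nsmul_eq_mul]
  push_cast
  ring

variable [Finite K]

lemma sum_Iic_eq_finsum [LocallyFiniteOrderBot (Submodule K V)] (N : Submodule K V) (f : ℕ → ℤ) :
    ∑ W ∈ Iic N, f (finrank K W) = ∑ᶠ W : Submodule K N, f (finrank K W) := by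
  have : Finite V := Module.finite_of_finite K
  have : Fintype (Submodule K N) := Fintype.ofFinite _
  rw [finsum_eq_sum_of_fintype]
  refine sum_nbij' (fun W => W.comap N.subtype) (fun W => W.map N.subtype) (by simp)
    (fun W _ => mem_Iic.2 (map_subtype_le N W)) (fun W hW => ?_)
    (fun W _ => comap_map_eq_of_injective N.injective_subtype W) (fun W hW => ?_)
  · rw [map_comap_subtype, inf_eq_right.2 (mem_Iic.1 hW)]
  · rw [(comapSubtypeEquivOfLe (mem_Iic.1 hW)).finrank_eq]

theorem finsum_submodule_neg_one_pow_mul_pow_choose_two :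
    ∑ᶠ W : Submodule K V, (-1 : ℤ) ^ finrank K W * (Nat.card K : ℤ) ^ (finrank K W).choose 2
      = ∏ i ∈ range (finrank K V), (1 - (Nat.card K : ℤ) ^ i) := by
  induction hn : finrank K V generalizing V with
  | zero =>
    rw [finsum_eq_single _ ⊥ fun W hW => (hW (finrank_eq_zero.1 (by
      have := Submodule.finrank_le W; omega))).elim]
    simp
  | succ n ih =>
    classical
    have : Finite V := Module.finite_of_finite K
    let : Fintype (Submodule K V) := Fintype.ofFinite _
    let : LocallyFiniteOrder (Submodule K V) := Fintype.toLocallyFiniteOrder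
    let b := Module.finBasis K V
    let i₀ : Fin (finrank K V) := ⟨0, by omega⟩
    have hv : b.coord i₀ (b i₀) = 1 := by simp
    have hker : finrank K (LinearMap.ker (b.coord i₀)) = n := by
      have := Module.Dual.finrank_ker_add_one_of_ne_zero (f := b.coord i₀)
        fun h => by simp [h] at hv
      omega
    rw [finsum_eq_sum_of_fintype, ← sum_fiberwise_of_maps_to (t := Iic (LinearMap.ker (b.coord i₀)))
      (g := (· ⊓ LinearMap.ker (b.coord i₀))) fun z _ => mem_Iic.2 inf_le_right,
      sum_congr rfl fun W hW => sum_filter_inf_ker_eq (mem_Iic.1 hW) hv, ← sum_mul,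
      sum_Iic_eq_finsum _ (fun d => (-1 : ℤ) ^ d * (Nat.card K : ℤ) ^ d.choose 2), ih hker,
      hker, prod_range_succ]

theorem mu_bot_submodule_eq [LocallyFiniteOrder (Submodule K V)] [DecidableEq (Submodule K V)]
    (N : Submodule K V) :
    mu ℤ ⊥ N = (-1 : ℤ) ^ finrank K N * (Nat.card K : ℤ) ^ (finrank K N).choose 2 := by
  have hsum : ∀ M : Submodule K V, (if M = ⊥ then 1 else 0 : ℤ) = ∑ W ∈ Iic M,
      (-1 : ℤ) ^ finrank K W * (Nat.card K : ℤ) ^ (finrank K W).choose 2 := fun M => by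
    rw [sum_Iic_eq_finsum _ (fun d => (-1 : ℤ) ^ d * (Nat.card K : ℤ) ^ d.choose 2),
      finsum_submodule_neg_one_pow_mul_pow_choose_two]
    split_ifs with hM
    · subst hM
      simp
    · exact (prod_eq_zero (mem_range.2 (one_le_finrank_iff.2 hM)) (by simp)).symm
  rw [moebius_inversion_bot _ _ hsum N]
  simp

end Count

/-- The reduced Euler characteristic of the order complex of the poset of proper
nontrivial subgroups of `(ℤ/p)^k` (the rank-`k` Tits building) equals
`(-1)^k * p^(k(k-1)/2)`.  The simplices of the order complex are the nonempty finite
chains in the poset, an `n`-simplex being a chain with `n+1` elements. -/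
theorem tits_building_reduced_euler_char (p : ℕ) (hp : p.Prime) (k : ℕ) (hk : 2 ≤ k) :
    (∑ᶠ (S : Finset {H : AddSubgroup (Fin k → ZMod p) // H ≠ ⊥ ∧ H ≠ ⊤})
        (_ : S.Nonempty ∧ IsChain (· ≤ ·)
          (S : Set {H : AddSubgroup (Fin k → ZMod p) // H ≠ ⊥ ∧ H ≠ ⊤})),
        (-1 : ℤ) ^ (S.card - 1)) - 1
      = (-1 : ℤ) ^ k * (p : ℤ) ^ (k * (k - 1) / 2) := by
  have : Fact p.Prime := ⟨hp⟩
  have : NeZero k := ⟨by omega⟩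
  classical
  let : LocallyFiniteOrder (AddSubgroup (Fin k → ZMod p)) := Fintype.toLocallyFiniteOrder
  let : Fintype (Submodule (ZMod p) (Fin k → ZMod p)) := Fintype.ofFinite _
  let : LocallyFiniteOrder (Submodule (ZMod p) (Fin k → ZMod p)) := Fintype.toLocallyFiniteOrder
  rw [finsum_chains_sub_one_eq_reducedEulerChar,
    ← mu_eq_reducedEulerChar_Ioo bot_lt_top, ← mu_map_orderIso (AddSubgroup.toZModSubmodule p),
    OrderIso.map_bot, OrderIso.map_top, mu_bot_submodule_eq, finrank_top, finrank_fin_fun,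
    Nat.card_zmod, Nat.choose_two_right]
end
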